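/- Let H be a (k+m)-connected subgraph of a k-edge-connected graph G, with |V(H)| > 4(k+m)^2, and let T' be a subtree of H with m vertices avoiding N_G(G − V(H)). If U is an edge-cut of G − V(T') of size at most k−1 with the two sides F and F', then it is impossible for both sides to be nonempty; hence κ'(G − V(T')) ≥ k. -/
import Mathlib

/-- Number of edges between vertex sets `A` and `B` (counted as ordered pairs
with first coordinate in `A`; for disjoint `A`, `B` this is `d_G(A,B)`). -/
noncomputable def crossEdges {V : Type*} (G : SimpleGraph V) (A B : Set V) : ℕ :=
  {p : V × V | G.Adj p.1 p.2 ∧ p.1 ∈ A ∧ p.2 ∈ B}.ncard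

/-- Edge-connectivity of the induced subgraph of `G` on the vertex set `W`:
the minimum, over nonempty proper subsets `S` of `W`, of the number of edges
between `S` and `W \ S`. -/
noncomputable def edgeConnWithin {V : Type*} (G : SimpleGraph V) (W : Set V) : ℕ :=
  sInf {n | ∃ S : Set V, S ⊆ W ∧ S.Nonempty ∧ (W \ S).Nonempty ∧ crossEdges G S (W \ S) = n}

/-- `F` is a fragment of the induced subgraph of `G` on `W` with respect to some
minimum edge-cut: `F` and `W \ F` are nonempty, both are connected, and the set
of edges between them is a minimum edge-cut of `G[W]`. -/
def IsFragmentWithin {V : Type*} (G : SimpleGraph V) (W F : Set V) : Prop :=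
  F ⊆ W ∧ F.Nonempty ∧ (W \ F).Nonempty ∧
  (G.induce F).Connected ∧ (G.induce (W \ F)).Connected ∧
  crossEdges G F (W \ F) = edgeConnWithin G W

/-- `H` is `k`-(vertex-)connected: more than `k` vertices, and deleting fewer
than `k` vertices leaves a connected graph. -/
def VertexConnGE {α : Type*} (H : SimpleGraph α) (k : ℕ) : Prop :=
  k < Nat.card α ∧ ∀ S : Set α, S.ncard < k → (H.induce Sᶜ).Connected

/-- Neighborhood of a vertex set: `N_G(S) = (⋃ v ∈ S, N_G(v)) \ S`. -/
def nbhdSet {V : Type*} (G : SimpleGraph V) (S : Set V) : Set V :=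
  (⋃ v ∈ S, G.neighborSet v) \ S

/-- In any walk from a vertex satisfying `p` to one not satisfying `p`,
some edge crosses from `p` to `¬ p`. -/
lemma walk_cross {α : Type*} {G : SimpleGraph α} (p : α → Prop) :
    ∀ {u v : α}, G.Walk u v → p u → ¬ p v →
      ∃ x y, G.Adj x y ∧ p x ∧ ¬ p y := by
  intro u v w
  induction w with
  | nil => intro h h'; exact absurd h h'
  | @cons a b c h w ih =>
    intro hu hv
    by_cases hb : p b
    · exact ih hb hv
    · exact ⟨a, b, h, hu, hb⟩

lemma crossEdges_comm {V : Type*} (G : SimpleGraph V) (A B : Set V) :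
    crossEdges G A B = crossEdges G B A := by
  unfold crossEdges
  have : {p : V × V | G.Adj p.1 p.2 ∧ p.1 ∈ B ∧ p.2 ∈ A}
      = Prod.swap '' {p : V × V | G.Adj p.1 p.2 ∧ p.1 ∈ A ∧ p.2 ∈ B} := by
    ext ⟨a, b⟩
    simp only [Set.mem_setOf_eq, Set.mem_image, Prod.exists]
    constructor
    · rintro ⟨h, h1, h2⟩; exact ⟨b, a, ⟨h.symm, h2, h1⟩, rfl⟩
    · rintro ⟨x, y, ⟨h, h1, h2⟩, he⟩
      obtain ⟨rfl, rfl⟩ : y = a ∧ x = b := by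
        simpa [Prod.ext_iff] using he
      exact ⟨h.symm, h2, h1⟩
  rw [this, Set.ncard_image_of_injective _ Prod.swap_injective]

lemma crossEdges_union_le {V : Type*} [Fintype V] (G : SimpleGraph V) (A B C : Set V) :
    crossEdges G A (B ∪ C) ≤ crossEdges G A B + crossEdges G A C := by
  unfold crossEdges
  have : {p : V × V | G.Adj p.1 p.2 ∧ p.1 ∈ A ∧ p.2 ∈ B ∪ C}
      = {p : V × V | G.Adj p.1 p.2 ∧ p.1 ∈ A ∧ p.2 ∈ B}
        ∪ {p : V × V | G.Adj p.1 p.2 ∧ p.1 ∈ A ∧ p.2 ∈ C} := by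
    ext ⟨a, b⟩; simp only [Set.mem_setOf_eq, Set.mem_union]; tauto
  rw [this]
  exact Set.ncard_union_le _ _

/-- The final case analysis in the proof of Theorem 3.3. -/
theorem stmt_9 {V : Type*} [Fintype V] (G : SimpleGraph V)
    (k m : ℕ) (hk : 0 < k) (hm : 0 < m)
    (hG : k ≤ edgeConnWithin G Set.univ)
    (W : Set V) (H : SimpleGraph W)
    (hHG : ∀ x y : W, H.Adj x y → G.Adj x y)
    (hHconn : VertexConnGE H (k + m))
    (hWcard : 4 * (k + m) ^ 2 < W.ncard)
    (S : Set V) (hSW : S ⊆ W) (hScard : S.ncard = m)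
    (T' : SimpleGraph S) (hT'tree : T'.IsTree)
    (hT'H : ∀ x y : S, T'.Adj x y →
      ∃ (hx : (x : V) ∈ W) (hy : (y : V) ∈ W), H.Adj ⟨x, hx⟩ ⟨y, hy⟩)
    (havoid : S ∩ nbhdSet G Wᶜ = ∅) :
    (∀ F : Set V, F ⊆ Sᶜ → F.Nonempty → (Sᶜ \ F).Nonempty →
        crossEdges G F (Sᶜ \ F) ≤ k - 1 → False) ∧
    k ≤ edgeConnWithin G Sᶜ := by
  classical
  obtain ⟨hcard1, hconn⟩ := hHconn
  -- neighbors of S in G lie in W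
  have hnbr : ∀ a b : V, G.Adj a b → a ∈ S → b ∈ W := by
    intro a b hab haS
    by_contra hbW
    have haN : a ∈ nbhdSet G Wᶜ := by
      refine ⟨?_, fun h => h (hSW haS)⟩
      exact Set.mem_biUnion hbW hab.symm
    have : a ∈ S ∩ nbhdSet G Wᶜ := ⟨haS, haN⟩
    rw [havoid] at this
    exact this
  have hSne : S.Nonempty :=
    Set.nonempty_of_ncard_ne_zero (by omega)
  have key : ∀ F : Set V, F ⊆ Sᶜ → F.Nonempty → (Sᶜ \ F).Nonempty →
      crossEdges G F (Sᶜ \ F) ≤ k - 1 → False := by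
    intro F hFS hFne hF'ne hcut
    set F' : Set V := Sᶜ \ F with hF'def
    have hFdisjS : ∀ v ∈ F, v ∉ S := fun v hv => hFS hv
    -- cut size from F side in G: at least k
    have hmemU : ∀ (A : Set V), A.Nonempty → (Set.univ \ A).Nonempty →
        k ≤ crossEdges G A (Set.univ \ A) := by
      intro A hAne hAne'
      refine le_trans hG (Nat.sInf_le ?_)
      exact ⟨A, Set.subset_univ A, hAne, hAne', rfl⟩
    -- edge from F to S
    have hsplitF : Set.univ \ F = F' ∪ S := by
      ext v
      simp only [hF'def, Set.mem_diff, Set.mem_univ, true_and, Set.mem_union,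
        Set.mem_compl_iff]
      constructor
      · intro hv; by_cases hvS : v ∈ S
        · exact Or.inr hvS
        · exact Or.inl ⟨hvS, hv⟩
      · rintro (⟨_, hv⟩ | hvS)
        · exact hv
        · exact fun hvF => hFdisjS v hvF hvS
    have hFS1 : 1 ≤ crossEdges G F S := by
      have h1 : k ≤ crossEdges G F (Set.univ \ F) := by
        refine hmemU F hFne ⟨hSne.choose, Set.mem_univ _, fun h => hFdisjS _ h hSne.choose_spec⟩
      rw [hsplitF] at h1
      have h2 := crossEdges_union_le G F F' S
      omega
    obtain ⟨⟨f, s⟩, hadjf, hfF, hsS⟩ :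
        { p : V × V | G.Adj p.1 p.2 ∧ p.1 ∈ F ∧ p.2 ∈ S }.Nonempty :=
      Set.nonempty_of_ncard_ne_zero (show crossEdges G F S ≠ 0 by omega)
    have hfW : f ∈ W := hnbr s f hadjf.symm hsS
    -- edge from F' to S
    have hsplitF' : Set.univ \ F' = F ∪ S := by
      ext v
      simp only [hF'def, Set.mem_diff, Set.mem_univ, true_and, Set.mem_union,
        Set.mem_compl_iff, not_and, not_not]
      constructor
      · intro hv
        by_cases hvS : v ∈ S
        · exact Or.inr hvS
        · exact Or.inl (hv hvS)
      · rintro (hvF | hvS)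
        · exact fun _ => hvF
        · exact fun h => absurd hvS h
    have hcut' : crossEdges G F' F ≤ k - 1 := by
      rw [crossEdges_comm]; exact hcut
    have hF'S1 : 1 ≤ crossEdges G F' S := by
      have h1 : k ≤ crossEdges G F' (Set.univ \ F') :=
        hmemU F' hF'ne ⟨f, Set.mem_univ _, fun h => h.2 hfF⟩
      rw [hsplitF'] at h1
      have h2 := crossEdges_union_le G F' F S
      omega
    obtain ⟨⟨f', s'⟩, hadjf', hf'F', hs'S⟩ :
        { p : V × V | G.Adj p.1 p.2 ∧ p.1 ∈ F' ∧ p.2 ∈ S }.Nonempty :=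
      Set.nonempty_of_ncard_ne_zero (show crossEdges G F' S ≠ 0 by omega)
    have hf'W : f' ∈ W := hnbr s' f' hadjf'.symm hs'S
    -- the cut pairs
    set CP : Set (V × V) := { p : V × V | G.Adj p.1 p.2 ∧ p.1 ∈ F ∧ p.2 ∈ F' } with hCP
    have hCPcard : CP.ncard ≤ k - 1 := hcut
    set Xv : Set V := Prod.fst '' CP with hXv
    set Xv' : Set V := Prod.snd '' CP with hXv'
    have hXvcard : Xv.ncard ≤ k - 1 := le_trans Set.ncard_image_le hCPcard
    have hXv'card : Xv'.ncard ≤ k - 1 := le_trans Set.ncard_image_le hCPcard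
    have hXvF : Xv ⊆ F := by rintro v ⟨p, hp, rfl⟩; exact hp.2.1
    have hXv'F' : Xv' ⊆ F' := by rintro v ⟨p, hp, rfl⟩; exact hp.2.2
    -- Claim A : W ∩ F ⊆ Xv
    have claimA : ∀ a, a ∈ W → a ∈ F → a ∈ Xv := by
      intro a haW haF
      by_contra haX
      set R : Set ↥W := {w : ↥W | (w : V) ∈ S ∨ (w : V) ∈ Xv} with hR
      have hRcard : R.ncard < k + m := by
        have h1 : (Subtype.val '' R).ncard ≤ (S ∪ Xv).ncard := by
          apply Set.ncard_le_ncard _ (Set.toFinite _)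
          rintro v ⟨w, hw, rfl⟩; exact hw
        have h2 : R.ncard = (Subtype.val '' R).ncard :=
          (Set.ncard_image_of_injective R Subtype.val_injective).symm
        have h3 := Set.ncard_union_le S Xv
        omega
      have hconnR := hconn R hRcard
      have haR : (⟨a, haW⟩ : ↥W) ∈ Rᶜ := by
        intro h
        rcases h with h | h
        · exact hFdisjS a haF h
        · exact haX h
      have hf'R : (⟨f', hf'W⟩ : ↥W) ∈ Rᶜ := by
        intro h
        rcases h with h | h
        · exact hf'F'.1 h
        · exact hf'F'.2 (hXvF h)
      obtain ⟨wlk⟩ := hconnR.preconnected ⟨⟨a, haW⟩, haR⟩ ⟨⟨f', hf'W⟩, hf'R⟩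
      obtain ⟨x, y, hxy, hx, hy⟩ :=
        walk_cross (fun z : ↥(Rᶜ) => ((z : ↥W) : V) ∈ F) wlk haF (fun h => hf'F'.2 h)
      have hadj : G.Adj ((x : ↥W) : V) ((y : ↥W) : V) := hHG _ _ hxy
      have hyS : ((y : ↥W) : V) ∉ S := fun h => y.2 (Or.inl h)
      have hyF' : ((y : ↥W) : V) ∈ F' := ⟨hyS, hy⟩
      have : ((x : ↥W) : V) ∈ Xv := ⟨(_, _), ⟨hadj, hx, hyF'⟩, rfl⟩
      exact x.2 (Or.inr this)
    -- Claim B : W ∩ F' ⊆ Xv'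
    have claimB : ∀ b, b ∈ W → b ∈ F' → b ∈ Xv' := by
      intro b hbW hbF'
      by_contra hbX
      set R : Set ↥W := {w : ↥W | (w : V) ∈ S ∨ (w : V) ∈ Xv'} with hR
      have hRcard : R.ncard < k + m := by
        have h1 : (Subtype.val '' R).ncard ≤ (S ∪ Xv').ncard := by
          apply Set.ncard_le_ncard _ (Set.toFinite _)
          rintro v ⟨w, hw, rfl⟩; exact hw
        have h2 : R.ncard = (Subtype.val '' R).ncard :=
          (Set.ncard_image_of_injective R Subtype.val_injective).symm
        have h3 := Set.ncard_union_le S Xv'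
        omega
      have hconnR := hconn R hRcard
      have hbR : (⟨b, hbW⟩ : ↥W) ∈ Rᶜ := by
        intro h
        rcases h with h | h
        · exact hbF'.1 h
        · exact hbX h
      have hfR : (⟨f, hfW⟩ : ↥W) ∈ Rᶜ := by
        intro h
        rcases h with h | h
        · exact hFdisjS f hfF h
        · exact (hXv'F' h).2 hfF
      obtain ⟨wlk⟩ := hconnR.preconnected ⟨⟨b, hbW⟩, hbR⟩ ⟨⟨f, hfW⟩, hfR⟩
      obtain ⟨x, y, hxy, hx, hy⟩ :=
        walk_cross (fun z : ↥(Rᶜ) => ((z : ↥W) : V) ∈ F') wlk hbF' (fun h => h.2 hfF)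
      have hadj : G.Adj ((y : ↥W) : V) ((x : ↥W) : V) := (hHG _ _ hxy).symm
      have hyS : ((y : ↥W) : V) ∉ S := fun h => y.2 (Or.inl h)
      have hyF : ((y : ↥W) : V) ∈ F := by
        by_contra hyF
        exact hy ⟨hyS, hyF⟩
      have : ((x : ↥W) : V) ∈ Xv' := ⟨(_, _), ⟨hadj, hyF, hx⟩, rfl⟩
      exact x.2 (Or.inr this)
    -- W is too small
    have hWsub : W ⊆ S ∪ Xv ∪ Xv' := by
      intro w hw
      by_cases hwS : w ∈ S
      · exact Or.inl (Or.inl hwS)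
      · by_cases hwF : w ∈ F
        · exact Or.inl (Or.inr (claimA w hw hwF))
        · exact Or.inr (claimB w hw ⟨hwS, hwF⟩)
    have hWle : W.ncard ≤ (S ∪ Xv ∪ Xv').ncard :=
      Set.ncard_le_ncard hWsub (Set.toFinite _)
    have h4 := Set.ncard_union_le (S ∪ Xv) Xv'
    have h5 := Set.ncard_union_le S Xv
    have hkm : k + m ≤ (k + m) ^ 2 := Nat.le_self_pow (by norm_num) _
    omega
  refine ⟨key, ?_⟩
  -- |Sᶜ| ≥ 2
  have hWV : W.ncard ≤ Nat.card V := by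
    have := Set.ncard_le_ncard (Set.subset_univ W) (Set.toFinite _)
    rwa [Set.ncard_univ] at this
  have hcompl := Set.ncard_add_ncard_compl S
  have hkm : k + m ≤ (k + m) ^ 2 := Nat.le_self_pow (by norm_num) _
  have hSc2 : 1 < Sᶜ.ncard := by omega
  obtain ⟨a, ha, b, hb, hab⟩ := (Set.one_lt_ncard (Set.toFinite _)).mp hSc2
  refine le_csInf ⟨crossEdges G {a} (Sᶜ \ {a}), {a}, ?_, ⟨a, rfl⟩, ⟨b, hb, fun h => hab h.symm⟩, rfl⟩ ?_
  · simpa using ha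
  · rintro n ⟨F, hFsub, hFne, hF'ne, rfl⟩
    by_contra hlt
    exact key F hFsub hFne hF'ne (by omega)
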